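/- Let G be a group, F and A finite subsets of G with identity issues ignored, and suppose T̃ ⊆ A satisfies |T̃|/|A| > 1 − δ for some δ ∈ (0,1). Define T = {t ∈ T̃ : F·t ⊆ T̃}. Then |A \ T| ≤ ∑_{g∈F} (|gA \ A| + |A \ T̃|) + |A \ T̃|; in particular if |gA \ A| ≤ δ|A| for every g ∈ F, then |A \ T| ≤ (2|F| + 1)·δ·|A|. -/

import Mathlib

open Finset Pointwise

/-! A point of `A` lies outside `T` either because it misses `T̃`, or because some `g ∈ F`
moves it out of `T̃`. In the latter case `g a` lies in `gA \ A` or in `A \ T̃`, and since left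
translation by `g` is injective, this happens for at most `|gA \ A| + |A \ T̃|` points `a`. -/

section LeftCancel

variable {G : Type*} [Mul G] [IsLeftCancelMul G] [DecidableEq G]

theorem card_filter_mul_notMem_le (g : G) (A T' : Finset G) :
    (A.filter fun a => g * a ∉ T').card ≤ ((A.image (g * ·)) \ A).card + (A \ T').card := by
  have hmaps : ((A.filter fun a => g * a ∉ T').image (g * ·)) ⊆ ((A.image (g * ·)) \ A) ∪ (A \ T') := by
    simp only [subset_iff, mem_image, mem_filter, mem_union, mem_sdiff]
    rintro _ ⟨a, ⟨haA, hgaT'⟩, rfl⟩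
    by_cases hgaA : g * a ∈ A
    · exact .inr ⟨hgaA, hgaT'⟩
    · exact .inl ⟨⟨a, haA, rfl⟩, hgaA⟩
  calc (A.filter fun a => g * a ∉ T').card
      = ((A.filter fun a => g * a ∉ T').image (g * ·)).card :=
        (card_image_of_injective _ (mul_right_injective g)).symm
    _ ≤ (((A.image (g * ·)) \ A) ∪ (A \ T')).card := card_le_card hmaps
    _ ≤ _ := card_union_le _ _

end LeftCancel

theorem sdiff_filter_forall_mul_mem_subset {G : Type*} [Mul G] [DecidableEq G]
    (F A T' : Finset G) :
    A \ T'.filter (fun t => ∀ g ∈ F, g * t ∈ T')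
      ⊆ (A \ T') ∪ F.biUnion (fun g => A.filter fun a => g * a ∉ T') := by
  intro a ha
  simp only [mem_sdiff, mem_filter, not_and, not_forall] at ha
  simp only [mem_union, mem_sdiff, mem_biUnion, mem_filter]
  by_cases haT' : a ∈ T'
  · obtain ⟨g, hg, hgaT'⟩ := ha.2 haT'
    exact .inr ⟨g, hg, ha.1, hgaT'⟩
  · exact .inl ⟨ha.1, haT'⟩

theorem card_sdiff_filter_forall_mul_mem_le {G : Type*} [Mul G] [IsLeftCancelMul G]
    [DecidableEq G] (F A T' : Finset G) :
    (A \ T'.filter (fun t => ∀ g ∈ F, g * t ∈ T')).card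
      ≤ ∑ g ∈ F, (((A.image (g * ·)) \ A).card + (A \ T').card) + (A \ T').card :=
  calc (A \ T'.filter (fun t => ∀ g ∈ F, g * t ∈ T')).card
      ≤ ((A \ T') ∪ F.biUnion (fun g => A.filter fun a => g * a ∉ T')).card :=
        card_le_card (sdiff_filter_forall_mul_mem_subset F A T')
    _ ≤ (A \ T').card + ∑ g ∈ F, (A.filter fun a => g * a ∉ T').card :=
        (card_union_le _ _).trans (add_le_add_right card_biUnion_le _)
    _ ≤ (A \ T').card + ∑ g ∈ F, (((A.image (g * ·)) \ A).card + (A \ T').card) := by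
        gcongr with g
        exact card_filter_mul_notMem_le g A T'
    _ = _ := add_comm _ _

theorem card_sdiff_le_of_mul_card_lt {α : Type*} [DecidableEq α] {A T' : Finset α} {δ : ℝ}
    (hT'A : T' ⊆ A) (hT'card : (1 - δ) * (A.card : ℝ) < (T'.card : ℝ)) :
    ((A \ T').card : ℝ) ≤ δ * A.card := by
  rw [card_sdiff_of_subset hT'A, Nat.cast_sub (card_le_card hT'A)]
  linarith

theorem tile_core_bound_general {G : Type*} [Group G] [DecidableEq G]
    (F A T' : Finset G) (δ : ℝ)
    (hT'A : T' ⊆ A) (hT'card : (1 - δ) * (A.card : ℝ) < (T'.card : ℝ)) :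
    (((A \ T'.filter (fun t => ∀ g ∈ F, g * t ∈ T')).card : ℝ)
        ≤ (∑ g ∈ F, (((A.image (fun a => g * a)) \ A).card + ((A \ T').card : ℝ)))
            + ((A \ T').card : ℝ))
    ∧ ((∀ g ∈ F, (((A.image (fun a => g * a)) \ A).card : ℝ) ≤ δ * (A.card : ℝ)) →
        ((A \ T'.filter (fun t => ∀ g ∈ F, g * t ∈ T')).card : ℝ)
          ≤ (2 * (F.card : ℝ) + 1) * δ * (A.card : ℝ)) := by
  have hbound : ((A \ T'.filter (fun t => ∀ g ∈ F, g * t ∈ T')).card : ℝ)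
      ≤ (∑ g ∈ F, (((A.image (fun a => g * a)) \ A).card + ((A \ T').card : ℝ)))
          + ((A \ T').card : ℝ) := by
    exact_mod_cast card_sdiff_filter_forall_mul_mem_le F A T'
  refine ⟨hbound, fun hsmall => ?_⟩
  have hAT' := card_sdiff_le_of_mul_card_lt hT'A hT'card
  calc _ ≤ _ := hbound
    _ ≤ ∑ g ∈ F, (δ * A.card + δ * A.card) + δ * A.card := by
        gcongr with g hg
        exact hsmall g hg
    _ = (2 * (F.card : ℝ) + 1) * δ * A.card := by
        rw [sum_const, nsmul_eq_mul]
        ring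

/-- let `F, A` be finite subsets of a group `G`, `T̃ ⊆ A` with
`|T̃| > (1-δ)|A|`, and `T = {t ∈ T̃ : F·t ⊆ T̃}`.  Then
`|A \ T| ≤ ∑_{g∈F} (|gA \ A| + |A \ T̃|) + |A \ T̃|`; in particular, if `|gA \ A| ≤ δ|A|`
for every `g ∈ F`, then `|A \ T| ≤ (2|F|+1) δ |A|`. -/
theorem tile_core_bound {G : Type*} [Group G] [DecidableEq G]
    (F A T' : Finset G) (δ : ℝ) (hδ0 : 0 < δ) (hδ1 : δ < 1)
    (hT'A : T' ⊆ A) (hT'card : (1 - δ) * (A.card : ℝ) < (T'.card : ℝ)) :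
    (((A \ T'.filter (fun t => ∀ g ∈ F, g * t ∈ T')).card : ℝ)
        ≤ (∑ g ∈ F, (((A.image (fun a => g * a)) \ A).card + ((A \ T').card : ℝ)))
            + ((A \ T').card : ℝ))
    ∧ ((∀ g ∈ F, (((A.image (fun a => g * a)) \ A).card : ℝ) ≤ δ * (A.card : ℝ)) →
        ((A \ T'.filter (fun t => ∀ g ∈ F, g * t ∈ T')).card : ℝ)
          ≤ (2 * (F.card : ℝ) + 1) * δ * (A.card : ℝ)) :=
  tile_core_bound_general F A T' δ hT'A hT'card
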